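/- Let A, B be unital C*-algebras, φ : A → B a positive unital map, τ a tracial state on B, f a convex function on an open interval I, and g an increasing convex continuous function on an open interval J with f(I) ⊆ J. Then for every self-adjoint a ∈ A with spectrum in I, τ(g(f(φ(a)))) ≤ τ(g(φ(f(a)))). -/

import Mathlib

/-!
Jensen's inequality holds for states: if `k` is convex and `ν` is a state, then
`k (ν x) ≤ ν (k x)`, because `k` lies above its supporting line at `ν x` and `ν` preserves
order and constants. Applied to the states `ν ∘ φ` and `ν`, and using that `g` is increasing,
it gives `g (f (ν b)) ≤ ν (g c)` for every state `ν`, where `b = φ a` and `c = φ (f a)`.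

A tracial positive functional `τ` turns such state-wise inequalities `F (ν b) ≤ ν G` into
`τ (F b) ≤ τ G`. Take a partition of unity `(E i)` on the spectrum of `b` with `E i` supported
near `t i`, and put `u i = E i (b)`. Traciality makes `x ↦ τ (u i * x)` positive, and after
normalisation it is a state under which `b` is close to `t i`; hence
`τ (u i) F (t i) ≲ τ (u i * G)`. Summing over `i` (`∑ u i = 1`) and refining the partition
gives the claim.
-/

open scoped ComplexOrder

open Set Metric

theorem ConvexOn.exists_subgradient_of_mem_interior {S : Set ℝ} {f : ℝ → ℝ}
    (hf : ConvexOn ℝ S f) {x : ℝ} (hx : x ∈ interior S) :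
    ∃ c : ℝ, ∀ t ∈ S, f x + c * (t - x) ≤ f t := by
  refine ⟨derivWithin f (Ioi x) x, fun t ht => ?_⟩
  rcases lt_trichotomy t x with htx | rfl | hxt
  · have hslope := (hf.slope_le_leftDeriv_of_mem_interior ht hx htx).trans
      (hf.leftDeriv_le_rightDeriv_of_mem_interior hx)
    rw [slope_def_field, div_le_iff₀ (sub_pos.mpr htx)] at hslope
    linarith
  · simp
  · have hslope := hf.rightDeriv_le_slope_of_mem_interior hx ht hxt
    rw [slope_def_field, le_div_iff₀ (sub_pos.mpr hxt)] at hslope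
    linarith

theorem IsCompact.exists_partitionOfUnity_ball {X : Type*} [MetricSpace X] {s : Set X}
    (hs : IsCompact s) {r : ℝ} (hr : 0 < r) :
    ∃ (t : Finset X) (ρ : PartitionOfUnity t X s),
      (∀ i : t, (i : X) ∈ s) ∧ ρ.IsSubordinate fun i => ball (i : X) r := by
  obtain ⟨t, hts, hcover⟩ := hs.elim_nhds_subcover (fun x => ball x r)
    fun x _ => ball_mem_nhds x hr
  obtain ⟨ρ, hρ⟩ := PartitionOfUnity.exists_isSubordinate hs.isClosed
    (fun i : t => ball (i : X) r) (fun _ => isOpen_ball) (by simpa [iUnion_subtype] using hcover)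
  exact ⟨t, ρ, fun i => hts i i.2, hρ⟩

namespace PartitionOfUnity

variable {B : Type*} [CStarAlgebra B] {ι : Type*} [Fintype ι] {b : B}
  (ρ : PartitionOfUnity ι ℝ (spectrum ℝ b))

theorem sum_cfc_eq_one (hb : IsSelfAdjoint b) : ∑ i, cfc (ρ i) b = 1 := by
  rw [← cfc_sum_univ _ b fun i => (ρ i).continuous.continuousOn, ← cfc_one ℝ b]
  refine cfc_congr fun t ht => ?_
  rw [Finset.sum_apply, ← finsum_eq_sum_of_fintype, ρ.sum_eq_one ht, Pi.one_apply]

theorem cfc_le_sum_smul_cfc [PartialOrder B] [StarOrderedRing B] {F : ℝ → ℝ}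
    (hF : ContinuousOn F (spectrum ℝ b)) (c : ι → ℝ)
    (h : ∀ i, ∀ t ∈ spectrum ℝ b, ρ i t ≠ 0 → F t ≤ c i) :
    cfc F b ≤ ∑ i, c i • cfc (ρ i) b := by
  have hsum : ∑ i, c i • cfc (ρ i) b = cfc (fun t => ∑ i, c i * ρ i t) b := by
    rw [← Finset.sum_fn, cfc_sum_univ _ b fun i => by fun_prop]
    exact Finset.sum_congr rfl fun i _ => (cfc_const_mul _ _ b).symm
  rw [hsum]
  refine cfc_mono (fun t ht => ?_) hF (by fun_prop)
  calc F t = ∑ i, ρ i t * F t := by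
        rw [← Finset.sum_mul, ← finsum_eq_sum_of_fintype, ρ.sum_eq_one ht, one_mul]
    _ ≤ ∑ i, c i * ρ i t := Finset.sum_le_sum fun i _ => by
        rcases eq_or_ne (ρ i t) 0 with h0 | h0
        · simp [h0]
        · rw [mul_comm]
          exact mul_le_mul_of_nonneg_right (h i t ht h0) (ρ.nonneg i t)

end PartitionOfUnity

namespace PositiveLinearMap

variable {A B : Type*} [CStarAlgebra A] [PartialOrder A] [CStarAlgebra B] [PartialOrder B]

theorem map_algebraMap (φ : A →ₚ[ℂ] B) (hφ : φ 1 = 1) (r : ℝ) :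
    φ (algebraMap ℝ A r) = algebraMap ℝ B r := by
  rw [Algebra.algebraMap_eq_smul_one, map_smul_of_tower, hφ, Algebra.algebraMap_eq_smul_one]

theorem re_mono (ω : A →ₚ[ℂ] ℂ) {x y : A} (h : x ≤ y) : (ω x).re ≤ (ω y).re :=
  (Complex.le_def.mp (OrderHomClass.mono ω h)).1

theorem re_map_smul (ω : A →ₚ[ℂ] ℂ) (r : ℝ) (x : A) : (ω (r • x)).re = r * (ω x).re := by
  rw [map_smul_of_tower, Complex.smul_re, smul_eq_mul]

theorem re_map_algebraMap (ω : A →ₚ[ℂ] ℂ) (r : ℝ) :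
    (ω (algebraMap ℝ A r)).re = r * (ω 1).re := by
  rw [Algebra.algebraMap_eq_smul_one, re_map_smul]

variable [StarOrderedRing A] [StarOrderedRing B]

theorem re_map_one_nonneg (ω : A →ₚ[ℂ] ℂ) : 0 ≤ (ω 1).re :=
  (Complex.nonneg_iff.mp (ω.map_nonneg zero_le_one)).1

theorem ofReal_re_map_one (ω : A →ₚ[ℂ] ℂ) : ((ω 1).re : ℂ) = ω 1 :=
  Complex.ext rfl (Complex.nonneg_iff.mp (ω.map_nonneg zero_le_one)).2

theorem isSelfAdjoint_map (φ : A →ₚ[ℂ] B) {x : A} (hx : IsSelfAdjoint x) :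
    IsSelfAdjoint (φ x) := by
  obtain ⟨y, z, hy, hz, rfl⟩ := hx.exists_nonneg_sub_nonneg
  rw [map_sub]
  exact (IsSelfAdjoint.of_nonneg (φ.map_nonneg hy)).sub (.of_nonneg (φ.map_nonneg hz))

theorem spectrum_map_subset_Icc (φ : A →ₚ[ℂ] B) (hφ : φ 1 = 1) {x : A} (hx : IsSelfAdjoint x)
    {p q : ℝ} (hσ : spectrum ℝ x ⊆ Icc p q) : spectrum ℝ (φ x) ⊆ Icc p q := by
  have hφx := φ.isSelfAdjoint_map hx
  have hp := OrderHomClass.mono φ (algebraMap_le_of_le_spectrum fun s hs => (hσ hs).1)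
  have hq := OrderHomClass.mono φ (le_algebraMap_of_spectrum_le fun s hs => (hσ hs).2)
  rw [φ.map_algebraMap hφ] at hp hq
  exact fun t ht => ⟨(algebraMap_le_iff_le_spectrum hφx).mp hp t ht,
    (le_algebraMap_iff_spectrum_le hφx).mp hq t ht⟩

theorem spectrum_map_subset (φ : A →ₚ[ℂ] B) (hφ : φ 1 = 1) {x : A} (hx : IsSelfAdjoint x)
    {K : Set ℝ} (hK : K.OrdConnected) (hσ : spectrum ℝ x ⊆ K) :
    spectrum ℝ (φ x) ⊆ K := by
  rcases subsingleton_or_nontrivial A with _ | _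
  · have : Subsingleton B := subsingleton_of_zero_eq_one <| by
      rw [← hφ, Subsingleton.elim (1 : A) 0, map_zero]
    simp [spectrum.of_subsingleton]
  have hσc := spectrum.isCompact (𝕜 := ℝ) x
  have hne := ContinuousFunctionalCalculus.spectrum_nonempty (R := ℝ) x hx
  exact (φ.spectrum_map_subset_Icc hφ hx (subset_Icc_csInf_csSup hσc.bddBelow hσc.bddAbove)).trans
    (hK.out (hσ (hσc.sInf_mem hne)) (hσ (hσc.sSup_mem hne)))

theorem re_map_mem (ν : A →ₚ[ℂ] ℂ) (hν : ν 1 = 1) {x : A} (hx : IsSelfAdjoint x)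
    {K : Set ℝ} (hK : K.OrdConnected) (hσ : spectrum ℝ x ⊆ K) : (ν x).re ∈ K := by
  have hre : algebraMap ℝ ℂ (ν x).re = ν x :=
    Complex.conj_eq_iff_re.mp (ν.isSelfAdjoint_map hx).star_eq
  apply ν.spectrum_map_subset hν hx hK hσ
  rw [← hre, spectrum.scalar_eq]
  rfl

end PositiveLinearMap

theorem ConvexOn.map_re_le_re_cfc {A : Type*} [CStarAlgebra A] [PartialOrder A]
    [StarOrderedRing A] (ν : A →ₚ[ℂ] ℂ) (hν : ν 1 = 1) {K : Set ℝ} (hK : IsOpen K)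
    {k : ℝ → ℝ} (hk : ConvexOn ℝ K k) {x : A} (hx : IsSelfAdjoint x)
    (hσ : spectrum ℝ x ⊆ K) : k (ν x).re ≤ (ν (cfc k x)).re := by
  set s := (ν x).re
  have hs : s ∈ interior K := hK.interior_eq.symm ▸ ν.re_map_mem hν hx hk.1.ordConnected hσ
  obtain ⟨c, hc⟩ := hk.exists_subgradient_of_mem_interior hs
  have hsupport : cfc (fun t => c * t + (k s - c * s)) x ≤ cfc k x :=
    cfc_mono (fun t ht => by linarith [hc t (hσ ht)]) (by fun_prop)
      ((hk.continuousOn hK).mono hσ)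
  rw [cfc_add_const _ _ x, cfc_const_mul_id c x] at hsupport
  have := ν.re_mono hsupport
  rwa [map_add, Complex.add_re, ν.re_map_smul, ν.re_map_algebraMap, hν, Complex.one_re,
    mul_one, add_sub_cancel] at this

namespace PositiveLinearMap

variable {B : Type*} [CStarAlgebra B] [PartialOrder B] [StarOrderedRing B]

theorem map_mul_nonneg_of_tracial (τ : B →ₚ[ℂ] ℂ) (hτ : ∀ x y, τ (x * y) = τ (y * x))
    {u x : B} (hu : 0 ≤ u) (hx : 0 ≤ x) : 0 ≤ τ (u * x) := by
  have := τ.map_nonneg (star_left_conjugate_nonneg hx (CFC.sqrt u))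
  rwa [(CFC.sqrt_nonneg u).isSelfAdjoint.star_eq, ← hτ, ← mul_assoc,
    CFC.sqrt_mul_sqrt_self u hu] at this

noncomputable def withDensity (τ : B →ₚ[ℂ] ℂ) (hτ : ∀ x y, τ (x * y) = τ (y * x)) {u : B}
    (hu : 0 ≤ u) : B →ₚ[ℂ] ℂ :=
  .mk₀ (τ.toLinearMap ∘ₗ LinearMap.mulLeft ℂ u) fun _ hx => τ.map_mul_nonneg_of_tracial hτ hu hx

@[simp]
theorem withDensity_apply (τ : B →ₚ[ℂ] ℂ) (hτ : ∀ x y, τ (x * y) = τ (y * x)) {u : B}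
    (hu : 0 ≤ u) (x : B) : τ.withDensity hτ hu x = τ (u * x) :=
  rfl

theorem mul_le_re_of_forall_state (ω : B →ₚ[ℂ] ℂ) {b G : B} (hG : IsSelfAdjoint G)
    {s r c : ℝ} (h : ∀ ν : B →ₚ[ℂ] ℂ, ν 1 = 1 → |(ν b).re - s| ≤ r → c ≤ (ν G).re)
    (hb : |(ω b).re - s * (ω 1).re| ≤ r * (ω 1).re) :
    (ω 1).re * c ≤ (ω G).re := by
  rcases ω.re_map_one_nonneg.eq_or_lt with hw | hw
  · have := ω.re_mono hG.neg_algebraMap_norm_le_self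
    rw [map_neg, Complex.neg_re, re_map_algebraMap, ← hw] at this
    simpa [← hw] using this
  set w := (ω 1).re
  let ν : B →ₚ[ℂ] ℂ := .mk₀ ((w⁻¹ : ℂ) • ω.toLinearMap) fun x hx =>
    mul_nonneg (by exact_mod_cast (inv_pos.mpr hw).le) (ω.map_nonneg hx)
  have hν : ∀ x, (ν x).re = w⁻¹ * (ω x).re := fun x => by
    change ((w⁻¹ : ℂ) * ω x).re = _
    rw [← Complex.ofReal_inv, Complex.re_ofReal_mul]
  have hν1 : ν 1 = 1 := by
    change (w⁻¹ : ℂ) * ω 1 = 1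
    rw [← ω.ofReal_re_map_one, ← Complex.ofReal_inv, ← Complex.ofReal_mul,
      inv_mul_cancel₀ hw.ne', Complex.ofReal_one]
  have := h ν hν1 (by
    rw [hν, show w⁻¹ * (ω b).re - s = w⁻¹ * ((ω b).re - s * w) by field_simp, abs_mul,
      abs_of_pos (inv_pos.mpr hw), inv_mul_le_iff₀ hw, mul_comm w r]
    exact hb)
  rwa [hν, le_inv_mul_iff₀ hw] at this

theorem abs_re_map_cfc_mul_sub_le (ω : B →ₚ[ℂ] ℂ) {b : B} (hb : IsSelfAdjoint b)
    {E : ℝ → ℝ} (hE : Continuous E) (hE0 : ∀ t, 0 ≤ E t) {s r : ℝ}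
    (hsupp : Function.support E ⊆ ball s r) :
    |(ω (cfc E b * b)).re - s * (ω (cfc E b)).re| ≤ r * (ω (cfc E b)).re := by
  have hpt : ∀ t, (s - r) * E t ≤ E t * t ∧ E t * t ≤ (s + r) * E t := fun t => by
    rcases eq_or_ne (E t) 0 with h0 | h0
    · simp [h0]
    · have := abs_lt.mp (Real.dist_eq t s ▸ (hsupp h0).out)
      constructor <;> nlinarith [hE0 t]
  have hlo := ω.re_mono (cfc_mono (a := b) fun t _ => (hpt t).1)
  have hhi := ω.re_mono (cfc_mono (a := b) fun t _ => (hpt t).2)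
  rw [cfc_const_mul (s - r) E b, re_map_smul] at hlo
  rw [cfc_const_mul (s + r) E b, re_map_smul] at hhi
  have hmul : cfc (fun t => E t * t) b = cfc E b * b := by
    rw [cfc_mul E (fun t => t) b, cfc_id' ℝ b]
  rw [hmul] at hlo hhi
  rw [abs_le]
  constructor <;> linarith

theorem re_map_cfc_le_of_partitionOfUnity (τ : B →ₚ[ℂ] ℂ)
    (hτ : ∀ x y, τ (x * y) = τ (y * x)) {b G : B} (hb : IsSelfAdjoint b) (hG : IsSelfAdjoint G)
    {ι : Type*} [Fintype ι] (ρ : PartitionOfUnity ι ℝ (spectrum ℝ b)) {t : ι → ℝ} {r : ℝ}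
    (hρ : ρ.IsSubordinate fun i => ball (t i) r) {F : ℝ → ℝ}
    (hF : ContinuousOn F (spectrum ℝ b)) {c : ι → ℝ} {δ : ℝ}
    (hFc : ∀ i, ∀ x ∈ spectrum ℝ b, dist x (t i) < r → F x ≤ c i)
    (hcG : ∀ i, ∀ ν : B →ₚ[ℂ] ℂ, ν 1 = 1 → |(ν b).re - t i| ≤ r → c i ≤ (ν G).re + δ) :
    (τ (cfc F b)).re ≤ (τ G).re + δ * (τ 1).re := by
  set u := fun i => cfc (ρ i) b
  have hu : ∀ i, 0 ≤ u i := fun i => cfc_nonneg fun x _ => ρ.nonneg i x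
  have hsupp : ∀ i, Function.support (ρ i) ⊆ ball (t i) r :=
    fun i => (subset_tsupport _).trans (hρ i)
  have hsum : ∑ i, u i = 1 := ρ.sum_cfc_eq_one hb
  have hglobal : (τ (cfc F b)).re ≤ ∑ i, c i * (τ (u i)).re := by
    have := τ.re_mono (ρ.cfc_le_sum_smul_cfc hF c fun i x hx hρx => hFc i x hx (hsupp i hρx))
    simpa only [map_sum, Complex.re_sum, re_map_smul] using this
  -- normalised, `x ↦ τ (u i * x)` is a state under which `b` stays within `r` of `t i`
  have hlocal : ∀ i, (τ (u i)).re * (c i - δ) ≤ (τ (u i * G)).re := fun i => by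
    have := (τ.withDensity hτ (hu i)).mul_le_re_of_forall_state hG (c := c i - δ)
      (fun ν hν hd => by linarith [hcG i ν hν hd])
      (by simpa using τ.abs_re_map_cfc_mul_sub_le hb (ρ i).continuous (ρ.nonneg i) (hsupp i))
    simpa using this
  calc (τ (cfc F b)).re ≤ ∑ i, c i * (τ (u i)).re := hglobal
    _ = ∑ i, (τ (u i)).re * (c i - δ) + δ * (τ (∑ i, u i)).re := by
        simp only [map_sum, Complex.re_sum, Finset.mul_sum, ← Finset.sum_add_distrib]
        exact Finset.sum_congr rfl fun i _ => by ring
    _ ≤ ∑ i, (τ (u i * G)).re + δ * (τ 1).re := by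
        rw [hsum]
        gcongr with i
        exact hlocal i
    _ = (τ G).re + δ * (τ 1).re := by
        rw [← Complex.re_sum, ← map_sum, ← Finset.sum_mul, hsum, one_mul]

theorem re_map_cfc_le_of_forall_state (τ : B →ₚ[ℂ] ℂ) (hτ : ∀ x y, τ (x * y) = τ (y * x))
    {b G : B} (hb : IsSelfAdjoint b) (hG : IsSelfAdjoint G) {K : Set ℝ} (hK : K.OrdConnected)
    (hσ : spectrum ℝ b ⊆ K) {F : ℝ → ℝ} (hF : ContinuousOn F K)
    (h : ∀ ν : B →ₚ[ℂ] ℂ, ν 1 = 1 → F (ν b).re ≤ (ν G).re) :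
    (τ (cfc F b)).re ≤ (τ G).re := by
  rcases subsingleton_or_nontrivial B with _ | _
  · rw [Subsingleton.elim (cfc F b) G]
  have hσc := spectrum.isCompact (𝕜 := ℝ) b
  have hne := ContinuousFunctionalCalculus.spectrum_nonempty (R := ℝ) b hb
  have hσpq := subset_Icc_csInf_csSup hσc.bddBelow hσc.bddAbove
  have hpqK := hK.out (hσ (hσc.sInf_mem hne)) (hσ (hσc.sSup_mem hne))
  have huc := Metric.uniformContinuousOn_iff.mp
    (isCompact_Icc.uniformContinuousOn_of_continuous (hF.mono hpqK))
  have hw := τ.re_map_one_nonneg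
  suffices hδ : ∀ δ > 0, (τ (cfc F b)).re ≤ (τ G).re + δ * (τ 1).re by
    refine le_of_forall_pos_le_add fun ε hε => (hδ (ε / ((τ 1).re + 1)) (by positivity)).trans ?_
    gcongr
    rw [div_mul_eq_mul_div, div_le_iff₀ (by positivity)]
    nlinarith
  intro δ hδ
  obtain ⟨ε, hε, hFε⟩ := huc (δ / 2) (half_pos hδ)
  obtain ⟨t, ρ, htσ, hρ⟩ := hσc.exists_partitionOfUnity_ball (half_pos hε)
  refine τ.re_map_cfc_le_of_partitionOfUnity hτ hb hG ρ hρ (hF.mono hσ)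
    (c := fun i => F i + δ / 2) (fun i x hx hd => ?_) (fun i ν hν hd => ?_)
  · have := hFε x (hσpq hx) i (hσpq (htσ i)) (by linarith)
    rw [Real.dist_eq] at this
    linarith [(abs_lt.mp this).2]
  · have hνb := ν.re_map_mem hν hb ordConnected_Icc hσpq
    have := hFε i (hσpq (htσ i)) _ hνb (by rw [Real.dist_eq, abs_sub_comm]; linarith)
    rw [Real.dist_eq] at this
    linarith [(abs_lt.mp this).2, h ν hν]

end PositiveLinearMap

theorem jensen_tracial_state {A B : Type*}
    [CStarAlgebra A] [PartialOrder A] [StarOrderedRing A]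
    [CStarAlgebra B] [PartialOrder B] [StarOrderedRing B]
    (φ : A →ₗ[ℂ] B) (hφ_pos : ∀ x : A, 0 ≤ x → 0 ≤ φ x) (hφ_unital : φ 1 = 1)
    (τ : B →ₗ[ℂ] ℂ) (hτ_pos : ∀ x : B, 0 ≤ x → 0 ≤ τ x)
    (hτ_tracial : ∀ x y : B, τ (x * y) = τ (y * x))
    (I J : Set ℝ) (hI_open : IsOpen I) (hJ_open : IsOpen J)
    (f g : ℝ → ℝ) (hf : ConvexOn ℝ I f)
    (hg_conv : ConvexOn ℝ J g) (hg_mono : MonotoneOn g J) (hfI : f '' I ⊆ J)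
    (a : A) (ha : IsSelfAdjoint a) (hspec : spectrum ℝ a ⊆ I) :
    (τ (cfc g (cfc f (φ a)))).re ≤ (τ (cfc g (φ (cfc f a)))).re := by
  let φ' : A →ₚ[ℂ] B := .mk₀ φ hφ_pos
  let τ' : B →ₚ[ℂ] ℂ := .mk₀ τ hτ_pos
  have hf_cont := hf.continuousOn hI_open
  have hg_cont := hg_conv.continuousOn hJ_open
  have hb : IsSelfAdjoint (φ a) := φ'.isSelfAdjoint_map ha
  have hc : IsSelfAdjoint (φ (cfc f a)) := φ'.isSelfAdjoint_map (cfc_predicate f a)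
  have hσb : spectrum ℝ (φ a) ⊆ I := φ'.spectrum_map_subset hφ_unital ha hf.1.ordConnected hspec
  have hσc : spectrum ℝ (φ (cfc f a)) ⊆ J := by
    refine φ'.spectrum_map_subset hφ_unital (cfc_predicate f a) hg_conv.1.ordConnected ?_
    rw [cfc_map_spectrum f a ha (hf_cont.mono hspec)]
    exact (image_mono hspec).trans hfI
  rw [← cfc_comp' g f (φ a) (hg_cont.mono ((image_mono hσb).trans hfI)) (hf_cont.mono hσb)]
  refine τ'.re_map_cfc_le_of_forall_state hτ_tracial hb (cfc_predicate g _) hf.1.ordConnected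
    hσb (hg_cont.comp hf_cont ((mapsTo_image f I).mono_right hfI)) fun ν hν => ?_
  have hνφ : (ν.comp φ') 1 = 1 := by
    change ν (φ 1) = 1
    rw [hφ_unital, hν]
  have hνb := (ν.comp φ').re_map_mem hνφ ha hf.1.ordConnected hspec
  calc g (f (ν (φ a)).re)
      ≤ g (ν (φ (cfc f a))).re := hg_mono (hfI (mem_image_of_mem f hνb))
        (ν.re_map_mem hν hc hg_conv.1.ordConnected hσc)
        (hf.map_re_le_re_cfc (ν.comp φ') hνφ hI_open ha hspec)
    _ ≤ (ν (cfc g (φ (cfc f a)))).re := hg_conv.map_re_le_re_cfc ν hν hJ_open hc hσc
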